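/- arXiv:1808.06185 — 2 statements merged into one kernel-verified Lean document; each statement's English description precedes it below -/
import Mathlib

section
/- Let G^{(1)}, H^{(1)} ⊆ GL^{(1)}_𝕜(M) be subgroups and T_G, T_H ⊆ End^{(1)}_𝕜(M) be 𝕜-submodules such that the pairs (T_G, G^{(1)}) and (T_H, H^{(1)}) are of weak Lie type. Assume: (a) the subgroup of GL^{(1)}_𝕜(M) generated by G^{(1)} ∪ H^{(1)} equals G^{(1)}·H^{(1)} := {g·h : g ∈ G^{(1)}, h ∈ H^{(1)}}; (b) for every i ≥ 1, (T_G + T_H) ∩ End^{(i)}_𝕜(M) = (T_G ∩ End^{(i)}_𝕜(M)) + (T_H ∩ End^{(i)}_𝕜(M)) and (G^{(1)}·H^{(1)}) ∩ GL^{(i)}_𝕜(M) = (G^{(1)} ∩ GL^{(i)}_𝕜(M))·(H^{(1)} ∩ GL^{(i)}_𝕜(M)). Then the pair (T_G + T_H, G^{(1)}·H^{(1)}) is of weak Lie type. -/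
variable {𝕜 M : Type*} [CommRing 𝕜] [AddCommGroup M] [Module 𝕜 M]

/-- `End^{(i)}` : the 𝕜-submodule of endomorphisms shifting the filtration by `i`. -/
def EndS (Mf : ℕ → Submodule 𝕜 M) (i : ℕ) : Submodule 𝕜 (Module.End 𝕜 M) where
  carrier := {φ | ∀ j : ℕ, ∀ x ∈ Mf j, φ x ∈ Mf (j + i)}
  add_mem' := by
    intro a b ha hb j x hx
    simpa [LinearMap.add_apply] using add_mem (ha j x hx) (hb j x hx)
  zero_mem' := by
    intro j x hx
    simpa using (Mf (j + i)).zero_mem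
  smul_mem' := by
    intro c a ha j x hx
    simpa [LinearMap.smul_apply] using Submodule.smul_mem _ c (ha j x hx)

/-- `GL^{(i)}` (for `i ≥ 1`). -/
def GLFil (Mf : ℕ → Submodule 𝕜 M) (i : ℕ) : Set (Module.End 𝕜 M)ˣ :=
  {u | (∀ j : ℕ, ∀ x ∈ Mf j, (u : Module.End 𝕜 M) x ∈ Mf j) ∧
    (∀ j : ℕ, ∀ x ∈ Mf j, ((u⁻¹ : (Module.End 𝕜 M)ˣ) : Module.End 𝕜 M) x ∈ Mf j) ∧
    ((u : Module.End 𝕜 M) - 1) ∈ EndS Mf i ∧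
    (((u⁻¹ : (Module.End 𝕜 M)ˣ) : Module.End 𝕜 M) - 1) ∈ EndS Mf i}

/-- `ord(φ) = sup {i : φ ∈ End^{(i)}} ∈ ℕ ∪ {∞}`. -/
noncomputable def ordE (Mf : ℕ → Submodule 𝕜 M) (φ : Module.End 𝕜 M) : ℕ∞ :=
  ⨆ i ∈ {i : ℕ | φ ∈ EndS Mf i}, (i : ℕ∞)

/-- The pair `(T, G)` is of weak Lie type. -/
def IsWeakLiePair (Mf : ℕ → Submodule 𝕜 M) (T : Submodule 𝕜 (Module.End 𝕜 M))
    (G : Subgroup (Module.End 𝕜 M)ˣ) : Prop :=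
  (∀ ξ ∈ T, ∃ g : (Module.End 𝕜 M)ˣ, g ∈ G ∧
    ordE Mf ((g : Module.End 𝕜 M) - 1 - ξ) ≥ 2 * ordE Mf ξ) ∧
  (∀ g : (Module.End 𝕜 M)ˣ, g ∈ G → ∃ ξ ∈ T,
    ordE Mf ((g : Module.End 𝕜 M) - 1 - ξ) ≥ 2 * ordE Mf ((g : Module.End 𝕜 M) - 1))

lemma endS_mono (Mf : ℕ → Submodule 𝕜 M) (hMf : Antitone Mf) {i j : ℕ} (hij : i ≤ j) :
    EndS Mf j ≤ EndS Mf i := by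
  intro φ hφ k x hx
  exact hMf (by omega) (hφ k x hx)

lemma le_ordE (Mf : ℕ → Submodule 𝕜 M) {φ : Module.End 𝕜 M} {n : ℕ}
    (h : φ ∈ EndS Mf n) : (n : ℕ∞) ≤ ordE Mf φ :=
  le_biSup (fun i : ℕ => (i : ℕ∞)) h

lemma mem_of_le_ordE (Mf : ℕ → Submodule 𝕜 M) (hMf : Antitone Mf)
    {φ : Module.End 𝕜 M} {n : ℕ} (hn : 1 ≤ n)
    (h : (n : ℕ∞) ≤ ordE Mf φ) : φ ∈ EndS Mf n := by
  by_contra hc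
  have hall : ∀ i ∈ {i : ℕ | φ ∈ EndS Mf i}, i ≤ n - 1 := by
    intro i hi
    by_contra h'
    push_neg at h'
    exact hc (endS_mono Mf hMf (by omega) hi)
  have hle : ordE Mf φ ≤ ((n - 1 : ℕ) : ℕ∞) := by
    refine iSup₂_le ?_
    intro i hi
    exact_mod_cast hall i hi
  have := h.trans hle
  have : n ≤ n - 1 := by exact_mod_cast this
  omega

lemma mul_mem_endS (Mf : ℕ → Submodule 𝕜 M) {φ ψ : Module.End 𝕜 M} {a b : ℕ}
    (hφ : φ ∈ EndS Mf a) (hψ : ψ ∈ EndS Mf b) : φ * ψ ∈ EndS Mf (a + b) := by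
  intro j x hx
  have h1 := hψ j x hx
  have h2 := hφ (j + b) _ h1
  have : j + b + a = j + (a + b) := by omega
  rw [this] at h2
  simpa [Module.End.mul_apply] using h2

lemma ordE_neg (Mf : ℕ → Submodule 𝕜 M) (φ : Module.End 𝕜 M) :
    ordE Mf (-φ) = ordE Mf φ := by
  simp [ordE, Set.mem_setOf_eq, neg_mem_iff]

lemma key_identity (g h ξG ξH : Module.End 𝕜 M) :
    g * h - 1 - (ξG + ξH) = (g - 1 - ξG) + (h - 1 - ξH) + (g - 1) * (h - 1) := by
  noncomm_ring

lemma key_mem (Mf : ℕ → Submodule 𝕜 M) (hMf : Antitone Mf)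
    {g h ξG ξH : Module.End 𝕜 M} {n : ℕ}
    (hA : g - 1 - ξG ∈ EndS Mf (2 * n)) (hB : h - 1 - ξH ∈ EndS Mf (2 * n))
    (hξG : ξG ∈ EndS Mf n) (hξH : ξH ∈ EndS Mf n) :
    g * h - 1 - (ξG + ξH) ∈ EndS Mf (2 * n) := by
  have hg1 : g - 1 ∈ EndS Mf n := by
    have := add_mem (endS_mono Mf hMf (by omega : n ≤ 2 * n) hA) hξG
    simpa using this
  have hh1 : h - 1 ∈ EndS Mf n := by
    have := add_mem (endS_mono Mf hMf (by omega : n ≤ 2 * n) hB) hξH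
    simpa using this
  have hprod : (g - 1) * (h - 1) ∈ EndS Mf (2 * n) := by
    have := mul_mem_endS Mf hg1 hh1
    rwa [show n + n = 2 * n by omega] at this
  rw [key_identity]
  exact add_mem (add_mem hA hB) hprod

lemma mul_sub_one_mem (Mf : ℕ → Submodule 𝕜 M) (hMf : Antitone Mf)
    {g h : Module.End 𝕜 M} {i : ℕ}
    (hg : g - 1 ∈ EndS Mf i) (hh : h - 1 ∈ EndS Mf i) :
    g * h - 1 ∈ EndS Mf i := by
  have hprod : (g - 1) * (h - 1) ∈ EndS Mf i :=
    endS_mono Mf hMf (by omega : i ≤ i + i) (mul_mem_endS Mf hg hh)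
  have hid : g * h - 1 = (g - 1) * (h - 1) + (g - 1) + (h - 1) := by noncomm_ring
  rw [hid]
  exact add_mem (add_mem hprod hg) hh

lemma inv_sub_one_mem (Mf : ℕ → Submodule 𝕜 M) {u : (Module.End 𝕜 M)ˣ} {n : ℕ}
    (hpres : ∀ j : ℕ, ∀ x ∈ Mf j, ((u⁻¹ : (Module.End 𝕜 M)ˣ) : Module.End 𝕜 M) x ∈ Mf j)
    (hu : (u : Module.End 𝕜 M) - 1 ∈ EndS Mf n) :
    ((u⁻¹ : (Module.End 𝕜 M)ˣ) : Module.End 𝕜 M) - 1 ∈ EndS Mf n := by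
  have h0 : ((u⁻¹ : (Module.End 𝕜 M)ˣ) : Module.End 𝕜 M) ∈ EndS Mf 0 := by
    intro j x hx
    simpa using hpres j x hx
  have hid : ((u⁻¹ : (Module.End 𝕜 M)ˣ) : Module.End 𝕜 M) - 1
      = -(((u⁻¹ : (Module.End 𝕜 M)ˣ) : Module.End 𝕜 M) * ((u : Module.End 𝕜 M) - 1)) := by
    rw [mul_sub, mul_one, ← Units.val_mul, inv_mul_cancel]
    simp [neg_sub]
  rw [hid]
  have := mul_mem_endS Mf h0 hu
  rw [zero_add] at this
  exact neg_mem this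

/-- if `(T_G, G^{(1)})` and `(T_H, H^{(1)})` are of weak Lie type, the
subgroup generated by `G^{(1)} ∪ H^{(1)}` equals `G^{(1)}·H^{(1)}`, and the filtration
compatibility conditions hold, then `(T_G + T_H, G^{(1)}·H^{(1)})` is of weak Lie type. -/
theorem statement7 (Mf : ℕ → Submodule 𝕜 M) (hMf0 : Mf 0 = ⊤) (hMf : Antitone Mf)
    (G H : Subgroup (Module.End 𝕜 M)ˣ)
    (hG : (G : Set (Module.End 𝕜 M)ˣ) ⊆ GLFil Mf 1)
    (hH : (H : Set (Module.End 𝕜 M)ˣ) ⊆ GLFil Mf 1)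
    (TG TH : Submodule 𝕜 (Module.End 𝕜 M))
    (hTG : TG ≤ EndS Mf 1) (hTH : TH ≤ EndS Mf 1)
    (hwG : IsWeakLiePair Mf TG G) (hwH : IsWeakLiePair Mf TH H)
    (hgen : ((G ⊔ H : Subgroup (Module.End 𝕜 M)ˣ) : Set (Module.End 𝕜 M)ˣ)
      = {u | ∃ g ∈ G, ∃ h ∈ H, u = g * h})
    (hTfil : ∀ i : ℕ, 1 ≤ i →
      (TG ⊔ TH) ⊓ EndS Mf i = (TG ⊓ EndS Mf i) ⊔ (TH ⊓ EndS Mf i))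
    (hGfil : ∀ i : ℕ, 1 ≤ i →
      {u : (Module.End 𝕜 M)ˣ | (∃ g ∈ G, ∃ h ∈ H, u = g * h) ∧ u ∈ GLFil Mf i}
        = {u | ∃ g : (Module.End 𝕜 M)ˣ, (g ∈ G ∧ g ∈ GLFil Mf i) ∧
            ∃ h : (Module.End 𝕜 M)ˣ, (h ∈ H ∧ h ∈ GLFil Mf i) ∧ u = g * h}) :
    (∀ ξ ∈ (TG ⊔ TH : Submodule 𝕜 (Module.End 𝕜 M)),
      ∃ u : (Module.End 𝕜 M)ˣ, (∃ g ∈ G, ∃ h ∈ H, u = g * h) ∧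
        ordE Mf ((u : Module.End 𝕜 M) - 1 - ξ) ≥ 2 * ordE Mf ξ) ∧
    (∀ u : (Module.End 𝕜 M)ˣ, (∃ g ∈ G, ∃ h ∈ H, u = g * h) →
      ∃ ξ ∈ (TG ⊔ TH : Submodule 𝕜 (Module.End 𝕜 M)),
        ordE Mf ((u : Module.End 𝕜 M) - 1 - ξ)
          ≥ 2 * ordE Mf ((u : Module.End 𝕜 M) - 1)) := by
  constructor
  · -- Part 1
    intro ξ hξ
    rcases eq_or_ne (ordE Mf ξ) ⊤ with htop | hfin
    · refine ⟨1, ⟨1, one_mem G, 1, one_mem H, (one_mul 1).symm⟩, ?_⟩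
      have h1 : ((1 : (Module.End 𝕜 M)ˣ) : Module.End 𝕜 M) - 1 - ξ = -ξ := by simp
      rw [h1, ordE_neg, htop]
      exact le_top
    · lift ordE Mf ξ to ℕ using hfin with n hn
      have hξ1 : ξ ∈ EndS Mf 1 := sup_le hTG hTH hξ
      have h1n : 1 ≤ n := by
        have h := le_ordE Mf hξ1
        rw [← hn] at h
        exact_mod_cast h
      have hξn : ξ ∈ EndS Mf n := mem_of_le_ordE Mf hMf h1n (le_of_eq hn)
      have hmem : ξ ∈ (TG ⊓ EndS Mf n) ⊔ (TH ⊓ EndS Mf n) := by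
        rw [← hTfil n h1n]
        exact Submodule.mem_inf.mpr ⟨hξ, hξn⟩
      rcases Submodule.mem_sup.mp hmem with ⟨ξG, hξG, ξH, hξH, rfl⟩
      obtain ⟨g, hgG, hgord⟩ := hwG.1 ξG (Submodule.mem_inf.mp hξG).1
      obtain ⟨h, hhH, hhord⟩ := hwH.1 ξH (Submodule.mem_inf.mp hξH).1
      have hgA : (g : Module.End 𝕜 M) - 1 - ξG ∈ EndS Mf (2 * n) := by
        refine mem_of_le_ordE Mf hMf (by omega) ?_
        calc ((2 * n : ℕ) : ℕ∞) = 2 * (n : ℕ∞) := by push_cast; ring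
          _ ≤ 2 * ordE Mf ξG :=
              mul_le_mul_right (le_ordE Mf (Submodule.mem_inf.mp hξG).2) 2
          _ ≤ _ := hgord
      have hhB : (h : Module.End 𝕜 M) - 1 - ξH ∈ EndS Mf (2 * n) := by
        refine mem_of_le_ordE Mf hMf (by omega) ?_
        calc ((2 * n : ℕ) : ℕ∞) = 2 * (n : ℕ∞) := by push_cast; ring
          _ ≤ 2 * ordE Mf ξH :=
              mul_le_mul_right (le_ordE Mf (Submodule.mem_inf.mp hξH).2) 2
          _ ≤ _ := hhord
      refine ⟨g * h, ⟨g, hgG, h, hhH, rfl⟩, ?_⟩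
      have hkey := key_mem Mf hMf hgA hhB
        (Submodule.mem_inf.mp hξG).2 (Submodule.mem_inf.mp hξH).2
      calc 2 * ((n : ℕ∞)) = ((2 * n : ℕ) : ℕ∞) := by push_cast; ring
        _ ≤ ordE Mf (((g * h : (Module.End 𝕜 M)ˣ) : Module.End 𝕜 M) - 1 - (ξG + ξH)) := by
            rw [Units.val_mul]
            exact le_ordE Mf hkey
  · -- Part 2
    intro u hu
    rcases eq_or_ne (ordE Mf ((u : Module.End 𝕜 M) - 1)) ⊤ with htop | hfin
    · exact ⟨0, zero_mem _, by rw [sub_zero, htop]; exact le_top⟩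
    · obtain ⟨g0, hg0, h0, hh0, rfl⟩ := hu
      lift ordE Mf (((g0 * h0 : (Module.End 𝕜 M)ˣ) : Module.End 𝕜 M) - 1) to ℕ
        using hfin with n hn
      have hu1 : ((g0 * h0 : (Module.End 𝕜 M)ˣ) : Module.End 𝕜 M) - 1 ∈ EndS Mf 1 := by
        rw [Units.val_mul]
        exact mul_sub_one_mem Mf hMf (hG hg0).2.2.1 (hH hh0).2.2.1
      have h1n : 1 ≤ n := by
        have h := le_ordE Mf hu1
        rw [← hn] at h
        exact_mod_cast h
      have hun : ((g0 * h0 : (Module.End 𝕜 M)ˣ) : Module.End 𝕜 M) - 1 ∈ EndS Mf n :=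
        mem_of_le_ordE Mf hMf h1n (le_of_eq hn)
      have hupres : ∀ j : ℕ, ∀ x ∈ Mf j,
          ((g0 * h0 : (Module.End 𝕜 M)ˣ) : Module.End 𝕜 M) x ∈ Mf j := by
        intro j x hx
        rw [Units.val_mul, Module.End.mul_apply]
        exact (hG hg0).1 j _ ((hH hh0).1 j x hx)
      have huinvpres : ∀ j : ℕ, ∀ x ∈ Mf j,
          (((g0 * h0)⁻¹ : (Module.End 𝕜 M)ˣ) : Module.End 𝕜 M) x ∈ Mf j := by
        intro j x hx
        rw [mul_inv_rev, Units.val_mul, Module.End.mul_apply]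
        exact (hH hh0).2.1 j _ ((hG hg0).2.1 j x hx)
      have hGLn : (g0 * h0) ∈ GLFil Mf n :=
        ⟨hupres, huinvpres, hun, inv_sub_one_mem Mf huinvpres hun⟩
      have humem : (g0 * h0) ∈ {u : (Module.End 𝕜 M)ˣ |
          (∃ g ∈ G, ∃ h ∈ H, u = g * h) ∧ u ∈ GLFil Mf n} :=
        ⟨⟨g0, hg0, h0, hh0, rfl⟩, hGLn⟩
      rw [hGfil n h1n] at humem
      obtain ⟨g, ⟨hgG, hgFil⟩, h, ⟨hhH, hhFil⟩, heq⟩ := humem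
      obtain ⟨ξG, hξGT, hgord⟩ := hwG.2 g hgG
      obtain ⟨ξH, hξHT, hhord⟩ := hwH.2 h hhH
      have hgn : (g : Module.End 𝕜 M) - 1 ∈ EndS Mf n := hgFil.2.2.1
      have hhn : (h : Module.End 𝕜 M) - 1 ∈ EndS Mf n := hhFil.2.2.1
      have hgA : (g : Module.End 𝕜 M) - 1 - ξG ∈ EndS Mf (2 * n) := by
        refine mem_of_le_ordE Mf hMf (by omega) ?_
        calc ((2 * n : ℕ) : ℕ∞) = 2 * (n : ℕ∞) := by push_cast; ring
          _ ≤ 2 * ordE Mf ((g : Module.End 𝕜 M) - 1) :=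
              mul_le_mul_right (le_ordE Mf hgn) 2
          _ ≤ _ := hgord
      have hhB : (h : Module.End 𝕜 M) - 1 - ξH ∈ EndS Mf (2 * n) := by
        refine mem_of_le_ordE Mf hMf (by omega) ?_
        calc ((2 * n : ℕ) : ℕ∞) = 2 * (n : ℕ∞) := by push_cast; ring
          _ ≤ 2 * ordE Mf ((h : Module.End 𝕜 M) - 1) :=
              mul_le_mul_right (le_ordE Mf hhn) 2
          _ ≤ _ := hhord
      have hξGn : ξG ∈ EndS Mf n := by
        have h' := sub_mem hgn (endS_mono Mf hMf (by omega : n ≤ 2 * n) hgA)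
        simpa using h'
      have hξHn : ξH ∈ EndS Mf n := by
        have h' := sub_mem hhn (endS_mono Mf hMf (by omega : n ≤ 2 * n) hhB)
        simpa using h'
      have hkey := key_mem Mf hMf hgA hhB hξGn hξHn
      refine ⟨ξG + ξH, Submodule.mem_sup.mpr ⟨ξG, hξGT, ξH, hξHT, rfl⟩, ?_⟩
      calc 2 * ((n : ℕ∞)) = ((2 * n : ℕ) : ℕ∞) := by push_cast; ring
        _ ≤ ordE Mf (((g0 * h0 : (Module.End 𝕜 M)ˣ) : Module.End 𝕜 M) - 1 - (ξG + ξH)) := by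
            rw [heq, Units.val_mul]
            exact le_ordE Mf hkey
end

section
/- Fix i ≥ 1 and suppose the pair (T, G^{(1)}) is pointwise of Lie type for the index i. Then for every z ∈ M and every N ≥ 0: the closure of T^{(i)}(z) contains M_{N+1} if and only if the closure of the orbit G^{(i)}z contains {z} + M_{N+1}; i.e., ⋂_{j≥1}(T^{(i)}(z) + M_j) ⊇ M_{N+1} if and only if ⋂_{j≥1}(G^{(i)}z + M_j) ⊇ {z} + M_{N+1}. -/
variable {𝕜 M : Type*} [CommRing 𝕜] [AddCommGroup M] [Module 𝕜 M]

/-- `ord(z) = sup {j : z ∈ M_j} ∈ ℕ ∪ {∞}`. -/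
noncomputable def ordM (Mf : ℕ → Submodule 𝕜 M) (z : M) : ℕ∞ :=
  ⨆ j ∈ {j : ℕ | z ∈ Mf j}, (j : ℕ∞)

/-- Closure of a subset in the filtration topology: `X̄ = ⋂_{j≥1} (X + M_j)`. -/
def clFil (Mf : ℕ → Submodule 𝕜 M) (X : Set M) : Set M :=
  {m | ∀ j : ℕ, 1 ≤ j → ∃ x ∈ X, m - x ∈ Mf j}

/-- `T^{(i)}(z) = {ξ(z) : ξ ∈ T ∩ End^{(i)}}`. -/
def TOrbit (Mf : ℕ → Submodule 𝕜 M) (T : Submodule 𝕜 (Module.End 𝕜 M)) (i : ℕ)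
    (z : M) : Set M :=
  {m | ∃ ξ : Module.End 𝕜 M, ξ ∈ T ∧ ξ ∈ EndS Mf i ∧ ξ z = m}

/-- `G^{(i)}z = {u(z) : u ∈ G ∩ GL^{(i)}}`. -/
def GOrbit (Mf : ℕ → Submodule 𝕜 M) (G : Subgroup (Module.End 𝕜 M)ˣ) (i : ℕ)
    (z : M) : Set M :=
  {m | ∃ u : (Module.End 𝕜 M)ˣ, u ∈ G ∧ u ∈ GLFil Mf i ∧ (u : Module.End 𝕜 M) z = m}

/-- The pair `(T, G)` is pointwise of Lie type for the index `i`. -/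
def IsPointwiseLie (Mf : ℕ → Submodule 𝕜 M) (T : Submodule 𝕜 (Module.End 𝕜 M))
    (G : Subgroup (Module.End 𝕜 M)ˣ) (i : ℕ) : Prop :=
  (∀ ξ : Module.End 𝕜 M, ξ ∈ T → ξ ∈ EndS Mf i → ∀ z : M,
    ∃ u : (Module.End 𝕜 M)ˣ, u ∈ G ∧ u ∈ GLFil Mf i ∧
      (ordM Mf (ξ z) < ⊤ →
        ordM Mf (((u : Module.End 𝕜 M) - 1 - ξ) z) > ordM Mf (ξ z))) ∧
  (∀ u : (Module.End 𝕜 M)ˣ, u ∈ G → u ∈ GLFil Mf i → ∀ z : M,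
    ∃ ξ : Module.End 𝕜 M, ξ ∈ T ∧ ξ ∈ EndS Mf i ∧
      (ordM Mf (((u : Module.End 𝕜 M) - 1) z) < ⊤ →
        ordM Mf (((u : Module.End 𝕜 M) - 1 - ξ) z)
          > ordM Mf (((u : Module.End 𝕜 M) - 1) z)))

/-- The pair `(T, G)` is pointwise of weak Lie type. -/
def IsPointwiseWeakLie (Mf : ℕ → Submodule 𝕜 M) (T : Submodule 𝕜 (Module.End 𝕜 M))
    (G : Subgroup (Module.End 𝕜 M)ˣ) : Prop :=
  ∀ i : ℕ, 1 ≤ i →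
    (∀ ξ : Module.End 𝕜 M, ξ ∈ T → ξ ∈ EndS Mf i → ∀ z : M,
      ∃ u : (Module.End 𝕜 M)ˣ, u ∈ G ∧ u ∈ GLFil Mf i ∧
        (ordM Mf (ξ z) < ⊤ →
          ordM Mf (((u : Module.End 𝕜 M) - 1 - ξ) z)
            ≥ 2 * ordE Mf ξ + ordM Mf z)) ∧
    (∀ u : (Module.End 𝕜 M)ˣ, u ∈ G → u ∈ GLFil Mf i → ∀ z : M,
      ∃ ξ : Module.End 𝕜 M, ξ ∈ T ∧ ξ ∈ EndS Mf i ∧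
        (ordM Mf (((u : Module.End 𝕜 M) - 1) z) < ⊤ →
          ordM Mf (((u : Module.End 𝕜 M) - 1 - ξ) z)
            ≥ 2 * ordE Mf ((u : Module.End 𝕜 M) - 1) + ordM Mf z))

section Aux

variable (Mf : ℕ → Submodule 𝕜 M)

lemma le_ordM {z : M} {k : ℕ} (h : z ∈ Mf k) : (k : ℕ∞) ≤ ordM Mf z :=
  le_iSup₂ (f := fun (j : ℕ) (_ : j ∈ {j : ℕ | z ∈ Mf j}) => (j : ℕ∞)) k h

lemma mem_of_le_ordM (hMf0 : Mf 0 = ⊤) (hMf : Antitone Mf) {z : M} {k : ℕ}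
    (h : (k : ℕ∞) ≤ ordM Mf z) : z ∈ Mf k := by
  rcases Nat.eq_zero_or_pos k with rfl | hk
  · simp [hMf0]
  by_contra hz
  have hle : ordM Mf z ≤ ((k - 1 : ℕ) : ℕ∞) := by
    refine iSup₂_le fun j hj => ?_
    have hjk : j < k := by
      by_contra h'
      exact hz (hMf (le_of_not_gt h') hj)
    exact_mod_cast Nat.le_sub_one_of_lt hjk
  have h2 : (k : ℕ∞) ≤ ((k - 1 : ℕ) : ℕ∞) := h.trans hle
  have : k ≤ k - 1 := by exact_mod_cast h2
  omega

lemma one_mem_GLFil (i : ℕ) : (1 : (Module.End 𝕜 M)ˣ) ∈ GLFil Mf i := by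
  refine ⟨fun j x hx => by simpa using hx, fun j x hx => by simpa using hx, ?_, ?_⟩ <;>
    simpa using (EndS Mf i).zero_mem

lemma mul_mem_GLFil {i : ℕ} {u v : (Module.End 𝕜 M)ˣ}
    (hu : u ∈ GLFil Mf i) (hv : v ∈ GLFil Mf i) : u * v ∈ GLFil Mf i := by
  obtain ⟨hu1, hu2, hu3, hu4⟩ := hu
  obtain ⟨hv1, hv2, hv3, hv4⟩ := hv
  refine ⟨?_, ?_, ?_, ?_⟩
  · intro j x hx
    simpa [Units.val_mul, Module.End.mul_apply] using hu1 j _ (hv1 j x hx)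
  · intro j x hx
    simpa [mul_inv_rev, Units.val_mul, Module.End.mul_apply] using hv2 j _ (hu2 j x hx)
  · intro j x hx
    have h1 : (u : Module.End 𝕜 M) (((v : Module.End 𝕜 M) - 1) x) ∈ Mf (j + i) :=
      hu1 _ _ (hv3 j x hx)
    have h2 := hu3 j x hx
    have heq : (((u * v : (Module.End 𝕜 M)ˣ) : Module.End 𝕜 M) - 1) x =
        (u : Module.End 𝕜 M) (((v : Module.End 𝕜 M) - 1) x) +
          ((u : Module.End 𝕜 M) - 1) x := by
      simp [Units.val_mul, Module.End.mul_apply, LinearMap.sub_apply, map_sub]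
    rw [heq]; exact add_mem h1 h2
  · intro j x hx
    have h1 : ((v⁻¹ : (Module.End 𝕜 M)ˣ) : Module.End 𝕜 M)
        ((((u⁻¹ : (Module.End 𝕜 M)ˣ) : Module.End 𝕜 M) - 1) x) ∈ Mf (j + i) :=
      hv2 _ _ (hu4 j x hx)
    have h2 := hv4 j x hx
    have heq : ((((u * v)⁻¹ : (Module.End 𝕜 M)ˣ) : Module.End 𝕜 M) - 1) x =
        ((v⁻¹ : (Module.End 𝕜 M)ˣ) : Module.End 𝕜 M)
          ((((u⁻¹ : (Module.End 𝕜 M)ˣ) : Module.End 𝕜 M) - 1) x) +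
          (((v⁻¹ : (Module.End 𝕜 M)ˣ) : Module.End 𝕜 M) - 1) x := by
      simp [mul_inv_rev, Units.val_mul, Module.End.mul_apply, LinearMap.sub_apply, map_sub]
    rw [heq]; exact add_mem h1 h2

end Aux
lemma mem_succ_of_lt_ord (Mf : ℕ → Submodule 𝕜 M) (hMf0 : Mf 0 = ⊤) (hMf : Antitone Mf)
    {z : M} {k : ℕ} (h : (k : ℕ∞) < ordM Mf z) : z ∈ Mf (k + 1) := by
  apply mem_of_le_ordM Mf hMf0 hMf
  have := Order.add_one_le_of_lt h
  exact_mod_cast this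
/-- if the pair `(T, G^{(1)})` is pointwise of Lie type for the index
`i ≥ 1`, then for every `z` and `N`, the closure of `T^{(i)}(z)` contains `M_{N+1}`
iff the closure of the orbit `G^{(i)}z` contains `{z} + M_{N+1}`. -/
theorem statement9 (Mf : ℕ → Submodule 𝕜 M) (hMf0 : Mf 0 = ⊤) (hMf : Antitone Mf)
    (G : Subgroup (Module.End 𝕜 M)ˣ)
    (hG : (G : Set (Module.End 𝕜 M)ˣ) ⊆ GLFil Mf 1)
    (T : Submodule 𝕜 (Module.End 𝕜 M)) (hT : T ≤ EndS Mf 1)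
    (i : ℕ) (hi : 1 ≤ i) (hLie : IsPointwiseLie Mf T G i) (z : M) (N : ℕ) :
    (↑(Mf (N + 1)) ⊆ clFil Mf (TOrbit Mf T i z)) ↔
      (∀ w ∈ Mf (N + 1), z + w ∈ clFil Mf (GOrbit Mf G i z)) := by
  obtain ⟨ha, hb⟩ := hLie
  constructor
  · -- T-density implies G-density
    intro hTd w hw j hj
    by_cases hNj : j ≤ N + 1
    · refine ⟨((1 : (Module.End 𝕜 M)ˣ) : Module.End 𝕜 M) z,
        ⟨1, G.one_mem, one_mem_GLFil Mf i, rfl⟩, ?_⟩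
      have h0 : z + w - ((1 : (Module.End 𝕜 M)ˣ) : Module.End 𝕜 M) z = w := by
        simp only [Units.val_one, Module.End.one_apply]; abel
      rw [h0]; exact hMf hNj hw
    push_neg at hNj
    have key : ∀ c : ℕ, ∀ m : ℕ, j ≤ m + c → ∀ w, w ∈ Mf (N + 1) → w ∈ Mf m →
        ∃ u : (Module.End 𝕜 M)ˣ, u ∈ G ∧ u ∈ GLFil Mf i ∧
          z + w - (u : Module.End 𝕜 M) z ∈ Mf j := by
      intro c
      induction c with
      | zero =>
        intro m hm w hw1 hwm
        refine ⟨1, G.one_mem, one_mem_GLFil Mf i, ?_⟩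
        have h0 : z + w - ((1 : (Module.End 𝕜 M)ˣ) : Module.End 𝕜 M) z = w := by
          simp only [Units.val_one, Module.End.one_apply]; abel
        rw [h0]; exact hMf (by omega) hwm
      | succ c ih =>
        intro m hm w hw1 hwm
        by_cases hc : j ≤ m + c
        · exact ih m hc w hw1 hwm
        have hmj : m + 1 ≤ j := by omega
        obtain ⟨x, hxT, he⟩ := hTd hw1 j hj
        obtain ⟨ξ, hξT, hξE, rfl⟩ := hxT
        have hξz : ξ z = w - (w - ξ z) := by abel
        have hξzm : ξ z ∈ Mf m := by
          rw [hξz]; exact sub_mem hwm (hMf (by omega) he)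
        have hξzN : ξ z ∈ Mf (N + 1) := by
          rw [hξz]; exact sub_mem hw1 (hMf (by omega) he)
        rcases eq_or_ne (ordM Mf (ξ z)) ⊤ with htop | hfin
        · have hξzj : ξ z ∈ Mf j :=
            mem_of_le_ordM Mf hMf0 hMf (by rw [htop]; exact le_top)
          refine ⟨1, G.one_mem, one_mem_GLFil Mf i, ?_⟩
          have h0 : z + w - ((1 : (Module.End 𝕜 M)ˣ) : Module.End 𝕜 M) z
              = ξ z + (w - ξ z) := by
            simp only [Units.val_one, Module.End.one_apply]; abel
          rw [h0]; exact add_mem hξzj he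
        · obtain ⟨v, hvG, hvGL, hvord⟩ := ha ξ hξT hξE z
          have hord := hvord (lt_of_le_of_ne le_top hfin)
          have hrm : ((v : Module.End 𝕜 M) - 1 - ξ) z ∈ Mf (m + 1) :=
            mem_succ_of_lt_ord Mf hMf0 hMf (lt_of_le_of_lt (le_ordM Mf hξzm) hord)
          have hrN : ((v : Module.End 𝕜 M) - 1 - ξ) z ∈ Mf (N + 1 + 1) :=
            mem_succ_of_lt_ord Mf hMf0 hMf (lt_of_le_of_lt (le_ordM Mf hξzN) hord)
          have hw1eq : z + w - (v : Module.End 𝕜 M) z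
              = (w - ξ z) - ((v : Module.End 𝕜 M) - 1 - ξ) z := by
            simp only [LinearMap.sub_apply, Module.End.one_apply]; abel
          have hw1m : z + w - (v : Module.End 𝕜 M) z ∈ Mf (m + 1) := by
            rw [hw1eq]; exact sub_mem (hMf hmj he) hrm
          have hw1N : z + w - (v : Module.End 𝕜 M) z ∈ Mf (N + 1) := by
            rw [hw1eq]; exact sub_mem (hMf (by omega) he) (hMf (by omega) hrN)
          have hym : ((v⁻¹ : (Module.End 𝕜 M)ˣ) : Module.End 𝕜 M)
              (z + w - (v : Module.End 𝕜 M) z) ∈ Mf (m + 1) := hvGL.2.1 _ _ hw1m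
          have hyN : ((v⁻¹ : (Module.End 𝕜 M)ˣ) : Module.End 𝕜 M)
              (z + w - (v : Module.End 𝕜 M) z) ∈ Mf (N + 1) := hvGL.2.1 _ _ hw1N
          obtain ⟨u'', hG'', hGL'', hmem''⟩ := ih (m + 1) (by omega) _ hyN hym
          refine ⟨v * u'', mul_mem hvG hG'', mul_mem_GLFil Mf hvGL hGL'', ?_⟩
          have hvy : (v : Module.End 𝕜 M)
              (((v⁻¹ : (Module.End 𝕜 M)ˣ) : Module.End 𝕜 M)
                (z + w - (v : Module.End 𝕜 M) z)) = z + w - (v : Module.End 𝕜 M) z := by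
            rw [← Module.End.mul_apply, ← Units.val_mul, mul_inv_cancel, Units.val_one,
              Module.End.one_apply]
          have hfinal : z + w - ((v * u'' : (Module.End 𝕜 M)ˣ) : Module.End 𝕜 M) z
              = (v : Module.End 𝕜 M)
                (z + ((v⁻¹ : (Module.End 𝕜 M)ˣ) : Module.End 𝕜 M)
                  (z + w - (v : Module.End 𝕜 M) z) - (u'' : Module.End 𝕜 M) z) := by
            rw [map_sub, map_add, hvy, ← Module.End.mul_apply, ← Units.val_mul]
            abel
          rw [hfinal]
          exact hvGL.1 j _ hmem''
    obtain ⟨u, h1, h2, h3⟩ := key j (N + 1) (by omega) w hw hw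
    exact ⟨(u : Module.End 𝕜 M) z, ⟨u, h1, h2, rfl⟩, h3⟩
  · -- G-density implies T-density
    intro hGd w hw j hj
    by_cases hNj : j ≤ N + 1
    · exact ⟨0, ⟨0, T.zero_mem, (EndS Mf i).zero_mem, rfl⟩, by
        simpa using hMf hNj hw⟩
    push_neg at hNj
    have key : ∀ c : ℕ, ∀ m : ℕ, j ≤ m + c → ∀ w, w ∈ Mf (N + 1) → w ∈ Mf m →
        ∃ ξ : Module.End 𝕜 M, ξ ∈ T ∧ ξ ∈ EndS Mf i ∧ w - ξ z ∈ Mf j := by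
      intro c
      induction c with
      | zero =>
        intro m hm w hw1 hwm
        exact ⟨0, T.zero_mem, (EndS Mf i).zero_mem, by
          simpa using hMf (by omega : j ≤ m) hwm⟩
      | succ c ih =>
        intro m hm w hw1 hwm
        by_cases hc : j ≤ m + c
        · exact ih m hc w hw1 hwm
        have hmj : m + 1 ≤ j := by omega
        obtain ⟨x, hxG, he⟩ := hGd w hw1 j hj
        obtain ⟨u, huG, huGL, rfl⟩ := hxG
        have hd : ((u : Module.End 𝕜 M) - 1) z
            = w - (z + w - (u : Module.End 𝕜 M) z) := by
          simp only [LinearMap.sub_apply, Module.End.one_apply]; abel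
        have hdm : ((u : Module.End 𝕜 M) - 1) z ∈ Mf m := by
          rw [hd]; exact sub_mem hwm (hMf (by omega) he)
        have hdN : ((u : Module.End 𝕜 M) - 1) z ∈ Mf (N + 1) := by
          rw [hd]; exact sub_mem hw1 (hMf (by omega) he)
        rcases eq_or_ne (ordM Mf (((u : Module.End 𝕜 M) - 1) z)) ⊤ with htop | hfin
        · have hdj : ((u : Module.End 𝕜 M) - 1) z ∈ Mf j :=
            mem_of_le_ordM Mf hMf0 hMf (by rw [htop]; exact le_top)
          refine ⟨0, T.zero_mem, (EndS Mf i).zero_mem, ?_⟩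
          have h0 : w - (0 : Module.End 𝕜 M) z
              = ((u : Module.End 𝕜 M) - 1) z + (z + w - (u : Module.End 𝕜 M) z) := by
            simp only [LinearMap.zero_apply, LinearMap.sub_apply, Module.End.one_apply]
            abel
          rw [h0]; exact add_mem hdj he
        · obtain ⟨ξ, hξT, hξE, hξord⟩ := hb u huG huGL z
          have hord := hξord (lt_of_le_of_ne le_top hfin)
          have hrm : ((u : Module.End 𝕜 M) - 1 - ξ) z ∈ Mf (m + 1) :=
            mem_succ_of_lt_ord Mf hMf0 hMf (lt_of_le_of_lt (le_ordM Mf hdm) hord)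
          have hrN : ((u : Module.End 𝕜 M) - 1 - ξ) z ∈ Mf (N + 1 + 1) :=
            mem_succ_of_lt_ord Mf hMf0 hMf (lt_of_le_of_lt (le_ordM Mf hdN) hord)
          have hweq : w - ξ z = ((u : Module.End 𝕜 M) - 1 - ξ) z
              + (z + w - (u : Module.End 𝕜 M) z) := by
            simp only [LinearMap.sub_apply, Module.End.one_apply]; abel
          have hwm' : w - ξ z ∈ Mf (m + 1) := by
            rw [hweq]; exact add_mem hrm (hMf hmj he)
          have hwN' : w - ξ z ∈ Mf (N + 1) := by
            rw [hweq]; exact add_mem (hMf (by omega) hrN) (hMf (by omega) he)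
          obtain ⟨ξ', hT', hE', hmem'⟩ := ih (m + 1) (by omega) (w - ξ z) hwN' hwm'
          refine ⟨ξ + ξ', add_mem hξT hT', add_mem hξE hE', ?_⟩
          have h0 : w - (ξ + ξ') z = (w - ξ z) - ξ' z := by
            simp only [LinearMap.add_apply]; abel
          rw [h0]; exact hmem'
    obtain ⟨ξ, h1, h2, h3⟩ := key j (N + 1) (by omega) w hw hw
    exact ⟨ξ z, ⟨ξ, h1, h2, rfl⟩, h3⟩
end
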